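/- For all rotation instructions r s : Rot and every list ts : List Turn, the generalized unfold step and fold step satisfy the interchange law r ⊕U (ts ⊕F s) = (r ⊕U ts) ⊕F s. -/

import Mathlib

inductive Turn : Type
  | L
  | R
deriving DecidableEq

open Turn

def inv : Turn → Turn
  | L => R
  | R => L

def interleave {α : Type*} : Stream' α → List α → List α
  | zs, [] => [zs.head]
  | zs, y :: ys => zs.head :: y :: interleave zs.tail ys

infixr:67 " ▷ " => interleave

def lr : Stream' Turn := fun n => if n % 2 = 0 then L else R

def rl : Stream' Turn := fun n => if n % 2 = 0 then R else L

inductive Rot : Type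
  | C
  | A
deriving DecidableEq

open Rot

lemma Turn.inv_inv (t : Turn) : inv (inv t) = t := by cases t <;> rfl

lemma interleave_append (zs : Stream' Turn) (ts : List Turn) (x : Turn) (us : List Turn) :
    zs ▷ (ts ++ x :: us) = (zs ▷ ts) ++ x :: (zs.drop (ts.length + 1) ▷ us) := by
  induction ts generalizing zs with
  | nil =>
    show zs.head :: x :: (zs.tail ▷ us) = [zs.head] ++ x :: (zs.drop 1 ▷ us)
    have : zs.tail = zs.drop 1 := by ext n; rfl
    rw [this]; rfl
  | cons t ts ih =>
    show zs.head :: t :: (zs.tail ▷ (ts ++ x :: us)) = _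
    rw [ih]
    have : zs.tail.drop (ts.length + 1) = zs.drop (t :: ts).length.succ := by
      ext n; show zs (n + (ts.length + 1) + 1) = zs (n + (ts.length + 2)); ring_nf
    rw [this]; rfl

lemma periodic (zs : Stream' Turn) (H2 : ∀ k, zs (k + 2) = zs k) (n k : ℕ) :
    zs (k + 2 * n) = zs k := by
  induction n with
  | zero => rfl
  | succ n ih => have := H2 (k + 2 * n); rw [show k + 2 * (n+1) = k + 2*n + 2 by ring, this, ih]

lemma map_inv_reverse_interleave (zs : Stream' Turn) (H2 : ∀ k, zs (k + 2) = zs k)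
    (H1 : zs 1 = inv (zs 0)) (ts : List Turn) :
    List.map inv (List.reverse (zs ▷ ts)) = (zs.drop (ts.length + 1)) ▷ (List.map inv (List.reverse ts)) := by
  induction ts generalizing zs with
  | nil =>
    show [inv (zs 0)] = [zs (0 + 1)]
    rw [H1]
  | cons t ts ih =>
    have hT2 : ∀ k, zs.tail (k + 2) = zs.tail k := fun k => H2 (k + 1)
    have hT1 : zs.tail 1 = inv (zs.tail 0) := by
      show zs 2 = inv (zs 1)
      rw [H2 0, H1, Turn.inv_inv]
    have key := ih zs.tail hT2 hT1
    simp only [interleave, List.reverse_cons, List.map_append, List.map_cons]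
    rw [key]
    rw [interleave_append]
    simp only [List.length_map, List.length_reverse, List.length_cons]
    have hdropdrop : (zs.tail.drop (ts.length + 1)) = zs.drop (ts.length + 2) := by
      ext n; simp [Stream'.drop, Stream'.tail]
    rw [hdropdrop]
    have hlast : ((zs.drop (ts.length + 2)).drop (ts.length + 1)).head = inv zs.head := by
      show zs (0 + (ts.length + 1) + (ts.length + 2)) = inv (zs 0)
      have h : 0 + (ts.length + 1) + (ts.length + 2) = 1 + 2 * (ts.length + 1) := by ring
      rw [h, periodic zs H2, H1]
    simp only [interleave, List.map_nil, Nat.add_assoc, Nat.reduceAdd, hlast]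
    simp [Stream'.head, interleave]

lemma lr_per : ∀ k, lr (k + 2) = lr k := by intro k; simp [lr, Nat.add_mod]
lemma rl_per : ∀ k, rl (k + 2) = rl k := by intro k; simp [rl, Nat.add_mod]
lemma lr_one : lr 1 = inv (lr 0) := rfl
lemma rl_one : rl 1 = inv (rl 0) := rfl

lemma main_aux (zs : Stream' Turn) (H2 : ∀ k, zs (k + 2) = zs k) (H1 : zs 1 = inv (zs 0))
    (x : Turn) (ts : List Turn) :
    (zs ▷ ts) ++ [x] ++ List.map inv (List.reverse (zs ▷ ts)) =
      zs ▷ (ts ++ [x] ++ List.map inv (List.reverse ts)) := by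
  rw [map_inv_reverse_interleave zs H2 H1 ts]
  rw [show ts ++ [x] ++ List.map inv (List.reverse ts) = ts ++ x :: List.map inv (List.reverse ts) by simp,
    interleave_append]
  simp

def unfoldStep : Rot → List Turn → List Turn
  | C, ts => ts ++ [L] ++ List.map inv (List.reverse ts)
  | A, ts => ts ++ [R] ++ List.map inv (List.reverse ts)

infixr:65 " ⊕U " => unfoldStep

def foldStep : List Turn → Rot → List Turn
  | ts, C => lr ▷ ts
  | ts, A => rl ▷ ts

infixl:65 " ⊕F " => foldStep

theorem step_interchange (r s : Rot) (ts : List Turn) :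
    r ⊕U (ts ⊕F s) = (r ⊕U ts) ⊕F s := by
  cases r <;> cases s <;>
    simp only [unfoldStep, foldStep] <;>
    [exact (main_aux lr lr_per lr_one L ts).symm ▸ main_aux lr lr_per lr_one L ts;
     exact main_aux rl rl_per rl_one L ts;
     exact main_aux lr lr_per lr_one R ts;
     exact main_aux rl rl_per rl_one R ts]
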